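/- Let μ be a Borel measure finite on dyadic cubes and 𝒮 a μ-sparse family of dyadic cubes. Then for every f ∈ L²(μ), ∑_{Q ∈ 𝒮} |⟨f⟩^μ_Q|² μ(Q) ≤ C ‖f‖²_{L²(μ)}, where C depends only on the sparseness constant. -/

import Mathlib

open MeasureTheory Filter
open scoped ENNReal

/-- A dyadic cube in `ℝⁿ`, encoded by its generation `k` (side length `2 ^ k`)
and position `m` (corner at `m * 2 ^ k`). -/
structure DyadicCube (n : ℕ) where
  k : ℤ
  m : Fin n → ℤ

namespace DyadicCube

variable {n : ℕ}

/-- The underlying half-open cube in `ℝⁿ`. -/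
def toSet (Q : DyadicCube n) : Set (Fin n → ℝ) :=
  {x | ∀ i, (Q.m i : ℝ) * (2 : ℝ) ^ Q.k ≤ x i ∧ x i < ((Q.m i : ℝ) + 1) * (2 : ℝ) ^ Q.k}

/-- The side length `ℓ(Q)` of the cube. -/
noncomputable def len (Q : DyadicCube n) : ℝ := (2 : ℝ) ^ Q.k

/-- The dyadic parent `Q^{(1)}`. -/
def parent (Q : DyadicCube n) : DyadicCube n :=
  ⟨Q.k + 1, fun i => Int.fdiv (Q.m i) 2⟩

/-- The ancestor `Q^{(r)}` of order `r`. -/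
def iterParent (Q : DyadicCube n) (r : ℕ) : DyadicCube n := parent^[r] Q

/-- The dyadic child of `Q` indexed by `ε : Fin n → Bool`. -/
def child (Q : DyadicCube n) (ε : Fin n → Bool) : DyadicCube n :=
  ⟨Q.k - 1, fun i => 2 * Q.m i + (if ε i then 1 else 0)⟩

/-- The descendant of `Q` of order `r` indexed by `v`; these enumerate `ch^r Q`. -/
def childIter (Q : DyadicCube n) (r : ℕ) (v : Fin n → Fin (2 ^ r)) : DyadicCube n :=
  ⟨Q.k - r, fun i => 2 ^ r * Q.m i + ((v i : ℕ) : ℤ)⟩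

end DyadicCube

variable {n : ℕ}

/-- The `μ`-average of `f` over a dyadic cube (zero when the cube is `μ`-null). -/
noncomputable def avg (μ : Measure (Fin n → ℝ)) (f : (Fin n → ℝ) → ℝ) (Q : DyadicCube n) : ℝ :=
  if μ Q.toSet = 0 then 0 else (∫ x in Q.toSet, f x ∂μ) / (μ Q.toSet).toReal

/-- The expectation `E^b_Q f = (⟨f⟩_Q / ⟨b⟩_Q) · b · 1_Q` adapted to an accretive function `b`. -/
noncomputable def Eb (μ : Measure (Fin n → ℝ)) (b f : (Fin n → ℝ) → ℝ) (Q : DyadicCube n) :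
    (Fin n → ℝ) → ℝ :=
  fun x => (avg μ f Q / avg μ b Q) * Q.toSet.indicator b x

/-- The martingale difference `Δ^b_Q f = ∑_{Q' ∈ ch Q} E^b_{Q'} f − E^b_Q f`. -/
noncomputable def Db (μ : Measure (Fin n → ℝ)) (b f : (Fin n → ℝ) → ℝ) (Q : DyadicCube n) :
    (Fin n → ℝ) → ℝ :=
  fun x => (∑ ε : Fin n → Bool, Eb μ b f (Q.child ε) x) - Eb μ b f Q x

/-- The expectation `E^μ_Q f = (⟨f⟩_Q / ⟨b_Q⟩_Q) b_Q` adapted to an accretive system. -/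
noncomputable def Esys (μ : Measure (Fin n → ℝ)) (b : DyadicCube n → (Fin n → ℝ) → ℝ)
    (f : (Fin n → ℝ) → ℝ) (Q : DyadicCube n) : (Fin n → ℝ) → ℝ :=
  fun x => (avg μ f Q / avg μ (b Q) Q) * b Q x

/-- The martingale difference `Δ^μ_Q` adapted to an accretive system. -/
noncomputable def Dsys (μ : Measure (Fin n → ℝ)) (b : DyadicCube n → (Fin n → ℝ) → ℝ)
    (f : (Fin n → ℝ) → ℝ) (Q : DyadicCube n) : (Fin n → ℝ) → ℝ :=
  fun x => (∑ ε : Fin n → Bool, Esys μ b f (Q.child ε) x) - Esys μ b f Q x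

/-- The (formal) adjoint `(Δ^μ_Q)^*`, given by its explicit formula. -/
noncomputable def DsysStar (μ : Measure (Fin n → ℝ)) (b : DyadicCube n → (Fin n → ℝ) → ℝ)
    (f : (Fin n → ℝ) → ℝ) (Q : DyadicCube n) : (Fin n → ℝ) → ℝ :=
  fun x => ∑ ε : Fin n → Bool,
    (Q.child ε).toSet.indicator
      (fun _ => avg μ (fun y => b (Q.child ε) y * f y) (Q.child ε)
                  / avg μ (b (Q.child ε)) (Q.child ε)
                - avg μ (fun y => b Q y * f y) Q / avg μ (b Q) Q) x

/-- The set `𝒮_b` of cubes where the accretive system changes between generations. -/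
def Sb (b : DyadicCube n → (Fin n → ℝ) → ℝ) : Set (DyadicCube n) :=
  {Q | b Q ≠ fun x => Q.toSet.indicator (b Q.parent) x}

/-- An `L^∞(μ)`-accretive system with constants `δ` and `C`. -/
structure AccretiveSystem (μ : Measure (Fin n → ℝ)) (b : DyadicCube n → (Fin n → ℝ) → ℝ)
    (δ C : ℝ) : Prop where
  meas : ∀ Q : DyadicCube n, Measurable (b Q)
  supp : ∀ Q : DyadicCube n, ∀ x, x ∉ Q.toSet → b Q x = 0
  bdd : ∀ Q : DyadicCube n, eLpNorm (b Q) ∞ μ ≤ ENNReal.ofReal C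
  acc : ∀ Q : DyadicCube n, δ * (μ Q.toSet).toReal ≤ |∫ x in Q.toSet, b Q x ∂μ|

/-- A family of dyadic cubes is `μ`-sparse (i.e. `μ`-Carleson) with constant `Λ`. -/
def IsSparse (μ : Measure (Fin n → ℝ)) (S : Set (DyadicCube n)) (Λ : ℝ≥0∞) : Prop :=
  ∀ R : DyadicCube n,
    ∑' Q : {Q : DyadicCube n // Q ∈ S ∧ Q.toSet ⊆ R.toSet}, μ Q.1.toSet ≤ Λ * μ R.toSet

/-!
A Bellman-function proof of the dyadic Carleson embedding. For a cube `R` let `m = μ(R)`,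
`I = ∫_R |f| dμ`, `F = ∫_R |f|² dμ`, and let `P ≤ Λ m` be the total measure of the cubes of `𝒮`
below `R` down to a fixed depth. Then `(4Λ + 2) (F - I² / (m + P / Λ))` bounds the sum of
`I(Q)² / μ(Q)` over those cubes, by induction on the depth: the children of `R` combine through
Cauchy–Schwarz, `(∑ xᵢ)² / ∑ wᵢ ≤ ∑ xᵢ² / wᵢ`, and if `R ∈ 𝒮` its own term `I² / m` is paid for
by the growth of `P`, since the weights of the children add up to `W = m + P' / Λ ∈ [m, 2m]`,
with `P'` the part of `P` strictly below `R`.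
A finite part of `𝒮` lies below finitely many disjoint cubes of one generation, and
`|⟨f⟩_Q|² μ(Q) ≤ I(Q)² / μ(Q)`.
-/

lemma sq_sum_div_le_sum_sq_div_of_nonneg {ι : Type*} (s : Finset ι) (x : ι → ℝ) {w : ι → ℝ}
    (hw : ∀ i ∈ s, 0 ≤ w i) (hxw : ∀ i ∈ s, w i = 0 → x i = 0) :
    (∑ i ∈ s, x i) ^ 2 / ∑ i ∈ s, w i ≤ ∑ i ∈ s, x i ^ 2 / w i := by
  refine div_le_of_le_mul₀ (Finset.sum_nonneg hw)
    (Finset.sum_nonneg fun i hi => div_nonneg (sq_nonneg _) (hw i hi))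
    (Finset.sum_sq_le_sum_mul_sum_of_sq_le_mul s
      (fun i hi => div_nonneg (sq_nonneg _) (hw i hi)) hw fun i hi => ?_)
  rcases (hw i hi).eq_or_lt with h | h
  · simp [hxw i hi h.symm]
  · rw [div_mul_cancel₀ _ h.ne']

lemma sq_div_add_mul_sq_div_le {x m W Λ : ℝ} (hΛ : 0 < Λ) (hm : 0 ≤ m) (hmW : m ≤ W)
    (hW : W ≤ 2 * m) :
    x ^ 2 / m + (4 * Λ + 2) * (x ^ 2 / (W + m / Λ)) ≤ (4 * Λ + 2) * (x ^ 2 / W) := by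
  rcases hm.eq_or_lt with rfl | hm
  · simp [le_antisymm (by simpa using hW) hmW]
  have hW0 : 0 < W := hm.trans_le hmW
  -- this amounts to `W (W + m / Λ) ≤ (4Λ + 2) m² / Λ`, whence the constant `4Λ + 2`
  have key : 1 / m + (4 * Λ + 2) / (W + m / Λ) ≤ (4 * Λ + 2) / W := by
    rw [div_add_div _ _ hm.ne' (by positivity), div_le_div_iff₀ (by positivity) hW0]
    field_simp
    nlinarith [mul_le_mul hW hW hW0.le (by positivity), mul_le_mul_of_nonneg_left hW hm.le]
  calc x ^ 2 / m + (4 * Λ + 2) * (x ^ 2 / (W + m / Λ))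
      = x ^ 2 * (1 / m + (4 * Λ + 2) / (W + m / Λ)) := by ring
    _ ≤ x ^ 2 * ((4 * Λ + 2) / W) := mul_le_mul_of_nonneg_left key (sq_nonneg x)
    _ = (4 * Λ + 2) * (x ^ 2 / W) := by ring

theorem sq_lintegral_le_measure_mul_lintegral_sq {α : Type*} [MeasurableSpace α] (μ : Measure α)
    {g : α → ℝ≥0∞} (hg : AEMeasurable g μ) :
    (∫⁻ x, g x ∂μ) ^ 2 ≤ μ Set.univ * ∫⁻ x, g x ^ 2 ∂μ := by
  have hH := ENNReal.lintegral_mul_le_Lp_mul_Lq μ Real.HolderConjugate.two_two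
    aemeasurable_const hg (f := 1)
  simp only [Pi.mul_apply, Pi.one_apply, one_mul, lintegral_const, ENNReal.rpow_two, one_pow]
    at hH
  calc (∫⁻ x, g x ∂μ) ^ 2
      ≤ ((μ Set.univ) ^ (1 / 2 : ℝ) * (∫⁻ x, g x ^ 2 ∂μ) ^ (1 / 2 : ℝ)) ^ 2 := by gcongr
    _ = μ Set.univ * ∫⁻ x, g x ^ 2 ∂μ := by
      rw [mul_pow, ← ENNReal.rpow_two, ← ENNReal.rpow_two, ← ENNReal.rpow_mul, ← ENNReal.rpow_mul]
      norm_num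

lemma lintegral_enorm_sq_eq_eLpNorm_sq {α E : Type*} [MeasurableSpace α] [NormedAddCommGroup E]
    (f : α → E) (μ : Measure α) : ∫⁻ x, ‖f x‖ₑ ^ 2 ∂μ = eLpNorm f 2 μ ^ 2 := by
  simpa using (eLpNorm_nnreal_pow_eq_lintegral (f := f) (μ := μ) (p := 2) two_ne_zero).symm

namespace DyadicCube

@[ext]
lemma ext {Q R : DyadicCube n} (hk : Q.k = R.k) (hm : Q.m = R.m) : Q = R := by
  cases Q; cases R; simp_all

instance : DecidableEq (DyadicCube n) := fun Q R =>
  decidable_of_iff (Q.k = R.k ∧ Q.m = R.m) ⟨fun h => ext h.1 h.2, fun h => h ▸ ⟨rfl, rfl⟩⟩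

lemma mem_toSet_iff {Q : DyadicCube n} {x : Fin n → ℝ} :
    x ∈ Q.toSet ↔ ∀ i, ⌊x i / 2 ^ Q.k⌋ = Q.m i := by
  have h : (0 : ℝ) < 2 ^ Q.k := by positivity
  simp only [toSet, Set.mem_ofPred_eq, Int.floor_eq_iff, le_div_iff₀ h, div_lt_iff₀ h]

lemma measurableSet_toSet (Q : DyadicCube n) : MeasurableSet Q.toSet := by
  have : Q.toSet =
      Set.univ.pi fun i => Set.Ico ((Q.m i : ℝ) * 2 ^ Q.k) ((Q.m i + 1) * 2 ^ Q.k) := by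
    ext x
    simp [toSet]
  exact this ▸ MeasurableSet.univ_pi fun _ => measurableSet_Ico

lemma disjoint_toSet {Q R : DyadicCube n} (hk : Q.k = R.k) (hne : Q ≠ R) :
    Disjoint Q.toSet R.toSet := by
  refine Set.disjoint_left.2 fun x hQ hR => hne (ext hk (funext fun i => ?_))
  rw [mem_toSet_iff] at hQ hR
  rw [← hQ i, ← hR i, hk]

lemma child_injective (Q : DyadicCube n) : Function.Injective Q.child := by
  intro ε ε' h
  funext i
  have := congr_fun (congrArg DyadicCube.m h) i
  simp only [child] at this
  revert this
  cases ε i <;> cases ε' i <;> simp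

lemma pairwise_disjoint_toSet_child (Q : DyadicCube n) :
    Pairwise (Function.onFun Disjoint fun ε => (Q.child ε).toSet) :=
  fun _ _ h => disjoint_toSet rfl ((child_injective Q).ne h)

lemma iUnion_toSet_child (Q : DyadicCube n) : ⋃ ε, (Q.child ε).toSet = Q.toSet := by
  ext x
  have hfloor : ∀ i, ⌊x i / 2 ^ Q.k⌋ = ⌊x i / 2 ^ (Q.k - 1)⌋ / 2 := fun i => by
    have := Int.floor_div_natCast (x i / 2 ^ (Q.k - 1)) 2
    push_cast at this
    rw [← this, div_div, ← zpow_add_one₀ two_ne_zero, sub_add_cancel]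
  simp only [Set.mem_iUnion, mem_toSet_iff, child, hfloor]
  constructor
  · rintro ⟨ε, hε⟩ i
    rw [hε i]
    split <;> omega
  · intro h
    refine ⟨fun i => decide (⌊x i / 2 ^ (Q.k - 1)⌋ = 2 * Q.m i + 1), fun i => ?_⟩
    have := h i
    split_ifs with hb <;> simp only [decide_eq_true_eq] at hb <;> omega

lemma toSet_child_subset (Q : DyadicCube n) (ε : Fin n → Bool) :
    (Q.child ε).toSet ⊆ Q.toSet :=
  iUnion_toSet_child Q ▸ Set.subset_iUnion (fun ε => (Q.child ε).toSet) ε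

lemma parent_child (Q : DyadicCube n) (ε : Fin n → Bool) : (Q.child ε).parent = Q := by
  ext
  · simp [parent, child]
  · simp only [parent, child]
    rw [Int.fdiv_eq_ediv_of_nonneg _ (by norm_num)]
    split <;> omega

lemma exists_eq_child_of_parent_eq {Q R : DyadicCube n} (h : Q.parent = R) :
    ∃ ε, Q = R.child ε := by
  subst h
  refine ⟨fun i => decide (Q.m i % 2 = 1), ?_⟩
  ext
  · simp [parent, child]
  · simp only [parent, child]
    rw [Int.fdiv_eq_ediv_of_nonneg _ (by norm_num)]
    split <;> simp_all <;> omega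

lemma iterParent_succ (Q : DyadicCube n) (r : ℕ) :
    Q.iterParent (r + 1) = (Q.iterParent r).parent :=
  Function.iterate_succ_apply' _ _ _

lemma k_iterParent (Q : DyadicCube n) (r : ℕ) : (Q.iterParent r).k = Q.k + r := by
  induction r with
  | zero => simp [iterParent]
  | succ r ih => rw [iterParent_succ, parent, ih]; push_cast; ring

def descendants : ℕ → DyadicCube n → Finset (DyadicCube n)
  | 0, R => {R}
  | d + 1, R => insert R (Finset.univ.biUnion fun ε => descendants d (R.child ε))

lemma mem_descendants_iff {d : ℕ} {Q R : DyadicCube n} :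
    Q ∈ descendants d R ↔ ∃ r ≤ d, Q.iterParent r = R := by
  induction d generalizing R with
  | zero => simp [descendants, iterParent, eq_comm]
  | succ d ih =>
    simp only [descendants, Finset.mem_insert, Finset.mem_biUnion, Finset.mem_univ, true_and, ih]
    constructor
    · rintro (rfl | ⟨ε, r, hr, hQ⟩)
      · exact ⟨0, Nat.zero_le _, rfl⟩
      · exact ⟨r + 1, by omega, by rw [iterParent_succ, hQ, parent_child]⟩
    · rintro ⟨_ | r, hr, hQ⟩
      · exact Or.inl hQ
      · rw [iterParent_succ] at hQ
        obtain ⟨ε, hε⟩ := exists_eq_child_of_parent_eq hQ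
        exact Or.inr ⟨ε, r, by omega, hε⟩

lemma toSet_subset_of_mem_descendants {d : ℕ} {Q R : DyadicCube n} (h : Q ∈ descendants d R) :
    Q.toSet ⊆ R.toSet := by
  induction d generalizing R with
  | zero => rw [descendants, Finset.mem_singleton] at h; rw [h]
  | succ d ih =>
    simp only [descendants, Finset.mem_insert, Finset.mem_biUnion] at h
    rcases h with rfl | ⟨ε, -, hε⟩
    · rfl
    · exact (ih hε).trans (toSet_child_subset R ε)

lemma sum_descendants_succ {M : Type*} [AddCommMonoid M] (t : DyadicCube n → M) (d : ℕ)
    (R : DyadicCube n) :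
    ∑ Q ∈ descendants (d + 1) R, t Q = t R + ∑ ε, ∑ Q ∈ descendants d (R.child ε), t Q := by
  have hR : R ∉ Finset.univ.biUnion fun ε => descendants d (R.child ε) := by
    simp only [Finset.mem_biUnion, Finset.mem_univ, true_and, not_exists]
    intro ε h
    obtain ⟨r, -, hr⟩ := mem_descendants_iff.1 h
    have hk := congrArg DyadicCube.k hr
    simp only [k_iterParent, child] at hk
    omega
  have hdisj : ((Finset.univ : Finset (Fin n → Bool)) : Set (Fin n → Bool)).PairwiseDisjoint
      fun ε => descendants d (R.child ε) := by
    intro ε _ ε' _ hne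
    refine Finset.disjoint_left.2 fun Q hQ hQ' => hne (child_injective R ?_)
    obtain ⟨r, -, hr⟩ := mem_descendants_iff.1 hQ
    obtain ⟨r', -, hr'⟩ := mem_descendants_iff.1 hQ'
    have hk := congrArg DyadicCube.k hr
    have hk' := congrArg DyadicCube.k hr'
    simp only [k_iterParent, child] at hk hk'
    rw [← hr, ← hr', show r' = r by omega]
  rw [descendants, Finset.sum_insert hR, Finset.sum_biUnion hdisj]

lemma sum_filter_descendants_succ {M : Type*} [AddCommMonoid M] (S : Set (DyadicCube n))
    [DecidablePred (· ∈ S)] (t : DyadicCube n → M) (d : ℕ) (R : DyadicCube n) :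
    ∑ Q ∈ descendants (d + 1) R with Q ∈ S, t Q =
      (if R ∈ S then t R else 0) + ∑ ε, ∑ Q ∈ descendants d (R.child ε) with Q ∈ S, t Q := by
  simp only [Finset.sum_filter]
  exact sum_descendants_succ _ d R

lemma exists_pairwiseDisjoint_descendants_cover (u : Finset (DyadicCube n)) :
    ∃ (top : DyadicCube n → DyadicCube n) (d : ℕ), (∀ Q ∈ u, Q ∈ descendants d (top Q)) ∧
      (u.image top : Set (DyadicCube n)).PairwiseDisjoint toSet := by
  obtain ⟨N, hN⟩ := (u.image DyadicCube.k).exists_le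
  have hk : ∀ Q ∈ u, (Q.iterParent (N - Q.k).toNat).k = N := fun Q hQ => by
    have := hN _ (Finset.mem_image_of_mem _ hQ)
    rw [k_iterParent]
    omega
  refine ⟨fun Q => Q.iterParent (N - Q.k).toNat, u.sup fun Q => (N - Q.k).toNat,
    fun Q hQ => mem_descendants_iff.2 ⟨_, Finset.le_sup hQ, rfl⟩, ?_⟩
  simp only [Finset.coe_image]
  rintro _ ⟨Q, hQ, rfl⟩ _ ⟨Q', hQ', rfl⟩ hne
  exact disjoint_toSet (by rw [hk Q hQ, hk Q' hQ']) hne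

def IsChildAdditive (t : DyadicCube n → ℝ) : Prop :=
  ∀ Q, t Q = ∑ ε, t (Q.child ε)

section Carleson

variable {m I F : DyadicCube n → ℝ} {S : Set (DyadicCube n)} [DecidablePred (· ∈ S)] {Λ : ℝ}

theorem carleson_bellman (hΛ : 0 < Λ) (hm : ∀ Q, 0 ≤ m Q) (hF : ∀ Q, 0 ≤ F Q)
    (hm_add : IsChildAdditive m) (hI_add : IsChildAdditive I) (hF_add : IsChildAdditive F)
    (hIF : ∀ Q, I Q ^ 2 ≤ m Q * F Q)
    (hpack : ∀ d R, ∑ Q ∈ descendants d R with Q ∈ S, m Q ≤ Λ * m R) (d : ℕ) (R : DyadicCube n) :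
    ∑ Q ∈ descendants d R with Q ∈ S, I Q ^ 2 / m Q +
        (4 * Λ + 2) * (I R ^ 2 / (m R + (∑ Q ∈ descendants d R with Q ∈ S, m Q) / Λ)) ≤
      (4 * Λ + 2) * F R := by
  have hc : 0 ≤ 4 * Λ + 2 := by positivity
  have hI_zero : ∀ Q, m Q = 0 → I Q = 0 := fun Q h => by
    simpa [h] using hIF Q
  have hIF' : ∀ Q, I Q ^ 2 / m Q ≤ F Q := fun Q =>
    div_le_of_le_mul₀ (hm Q) (hF Q) (by rw [mul_comm]; exact hIF Q)
  induction d generalizing R with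
  | zero =>
    simp only [descendants, Finset.filter_singleton]
    split_ifs
    · calc _ ≤ (4 * Λ + 2) * (I R ^ 2 / m R) := by
            simpa using sq_div_add_mul_sq_div_le (x := I R) hΛ (hm R) le_rfl
              (by linarith [hm R])
        _ ≤ (4 * Λ + 2) * F R := mul_le_mul_of_nonneg_left (hIF' R) hc
    · simpa using mul_le_mul_of_nonneg_left (hIF' R) hc
  | succ d ih =>
    set P := fun Q => ∑ Q' ∈ descendants d Q with Q' ∈ S, m Q'
    set w := fun ε => m (R.child ε) + P (R.child ε) / Λ
    have hP : ∀ Q, 0 ≤ P Q := fun Q => Finset.sum_nonneg fun Q' _ => hm Q'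
    have hsumP : (∑ ε, P (R.child ε)) / Λ ≤ m R := by
      rw [div_le_iff₀' hΛ, hm_add R, Finset.mul_sum]
      exact Finset.sum_le_sum fun ε _ => hpack d _
    have hW : ∑ ε, w ε = m R + (∑ ε, P (R.child ε)) / Λ := by
      simp only [w, Finset.sum_add_distrib, Finset.sum_div, ← hm_add R]
    have hchildren : ∑ ε, ∑ Q ∈ descendants d (R.child ε) with Q ∈ S, I Q ^ 2 / m Q +
        (4 * Λ + 2) * (I R ^ 2 / ∑ ε, w ε) ≤ (4 * Λ + 2) * F R := by
      have hCS : I R ^ 2 / ∑ ε, w ε ≤ ∑ ε, I (R.child ε) ^ 2 / w ε := by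
        rw [hI_add R]
        refine sq_sum_div_le_sum_sq_div_of_nonneg _ _ (fun ε _ => ?_) fun ε _ h => ?_
        · exact add_nonneg (hm _) (div_nonneg (hP _) hΛ.le)
        · exact hI_zero _ (le_antisymm (h ▸ le_add_of_nonneg_right
            (div_nonneg (hP _) hΛ.le)) (hm _))
      calc _ ≤ ∑ ε, ∑ Q ∈ descendants d (R.child ε) with Q ∈ S, I Q ^ 2 / m Q +
            (4 * Λ + 2) * ∑ ε, I (R.child ε) ^ 2 / w ε := by gcongr
        _ ≤ ∑ ε, (4 * Λ + 2) * F (R.child ε) := by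
            rw [Finset.mul_sum, ← Finset.sum_add_distrib]
            exact Finset.sum_le_sum fun ε _ => ih (R.child ε)
        _ = (4 * Λ + 2) * F R := by rw [← Finset.mul_sum, ← hF_add R]
    rw [sum_filter_descendants_succ, sum_filter_descendants_succ]
    split_ifs with hR
    · have hden : m R + (m R + ∑ ε, P (R.child ε)) / Λ = ∑ ε, w ε + m R / Λ := by
        rw [hW, add_div]; ring
      calc _ = ∑ ε, ∑ Q ∈ descendants d (R.child ε) with Q ∈ S, I Q ^ 2 / m Q +
            (I R ^ 2 / m R + (4 * Λ + 2) * (I R ^ 2 / (∑ ε, w ε + m R / Λ))) := by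
            rw [hden]; ring
        _ ≤ ∑ ε, ∑ Q ∈ descendants d (R.child ε) with Q ∈ S, I Q ^ 2 / m Q +
            (4 * Λ + 2) * (I R ^ 2 / ∑ ε, w ε) := by
            gcongr
            refine sq_div_add_mul_sq_div_le hΛ (hm R) ?_ ?_ <;> rw [hW]
            · exact le_add_of_nonneg_right (div_nonneg (Finset.sum_nonneg fun ε _ => hP _) hΛ.le)
            · linarith
        _ ≤ (4 * Λ + 2) * F R := hchildren
    · simpa [hW] using hchildren

theorem exists_pairwiseDisjoint_sum_sq_div_le (hΛ : 0 < Λ) (hm : ∀ Q, 0 ≤ m Q)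
    (hF : ∀ Q, 0 ≤ F Q) (hm_add : IsChildAdditive m) (hI_add : IsChildAdditive I)
    (hF_add : IsChildAdditive F) (hIF : ∀ Q, I Q ^ 2 ≤ m Q * F Q)
    (hpack : ∀ d R, ∑ Q ∈ descendants d R with Q ∈ S, m Q ≤ Λ * m R)
    (u : Finset (DyadicCube n)) (hu : ∀ Q ∈ u, Q ∈ S) :
    ∃ A : Finset (DyadicCube n), (A : Set (DyadicCube n)).PairwiseDisjoint toSet ∧
      ∑ Q ∈ u, I Q ^ 2 / m Q ≤ (4 * Λ + 2) * ∑ R ∈ A, F R := by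
  obtain ⟨top, d, hcover, hdisj⟩ := exists_pairwiseDisjoint_descendants_cover u
  have ht : ∀ Q, 0 ≤ I Q ^ 2 / m Q := fun Q => div_nonneg (sq_nonneg _) (hm Q)
  refine ⟨u.image top, hdisj, ?_⟩
  calc ∑ Q ∈ u, I Q ^ 2 / m Q
      = ∑ R ∈ u.image top, ∑ Q ∈ u with top Q = R, I Q ^ 2 / m Q :=
        (Finset.sum_fiberwise_of_maps_to (fun Q hQ => Finset.mem_image_of_mem top hQ) _).symm
    _ ≤ ∑ R ∈ u.image top, ∑ Q ∈ descendants d R with Q ∈ S, I Q ^ 2 / m Q := by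
        refine Finset.sum_le_sum fun R _ => Finset.sum_le_sum_of_subset_of_nonneg ?_
          fun Q _ _ => ht Q
        intro Q hQ
        rw [Finset.mem_filter] at hQ ⊢
        exact ⟨hQ.2 ▸ hcover Q hQ.1, hu Q hQ.1⟩
    _ ≤ ∑ R ∈ u.image top, (4 * Λ + 2) * F R := by
        refine Finset.sum_le_sum fun R _ => le_of_add_le_of_nonneg_left
          (carleson_bellman hΛ hm hF hm_add hI_add hF_add hIF hpack d R) ?_
        have hP : 0 ≤ ∑ Q ∈ descendants d R with Q ∈ S, m Q := Finset.sum_nonneg fun Q _ => hm Q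
        exact mul_nonneg (by positivity)
          (div_nonneg (sq_nonneg _) (add_nonneg (hm R) (div_nonneg hP hΛ.le)))
    _ = (4 * Λ + 2) * ∑ R ∈ u.image top, F R := (Finset.mul_sum _ _ _).symm

end Carleson

section Measure

variable {μ : Measure (Fin n → ℝ)}

lemma setLIntegral_eq_sum_child (h : (Fin n → ℝ) → ℝ≥0∞) (Q : DyadicCube n) :
    ∫⁻ x in Q.toSet, h x ∂μ = ∑ ε, ∫⁻ x in (Q.child ε).toSet, h x ∂μ := by
  rw [← iUnion_toSet_child Q, lintegral_iUnion (fun ε => measurableSet_toSet _)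
    (pairwise_disjoint_toSet_child Q), tsum_fintype]

lemma isChildAdditive_toReal_setLIntegral {h : (Fin n → ℝ) → ℝ≥0∞}
    (hfin : ∀ Q : DyadicCube n, ∫⁻ x in Q.toSet, h x ∂μ ≠ ∞) :
    IsChildAdditive fun Q => (∫⁻ x in Q.toSet, h x ∂μ).toReal := fun Q => by
  dsimp only
  rw [setLIntegral_eq_sum_child, ENNReal.toReal_sum fun ε _ => hfin _]

lemma isChildAdditive_measureReal (hfin : ∀ Q : DyadicCube n, μ Q.toSet ≠ ∞) :
    IsChildAdditive fun Q => μ.real Q.toSet := by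
  simpa [measureReal_def] using
    isChildAdditive_toReal_setLIntegral (μ := μ) (h := 1) (by simpa using hfin)

lemma _root_.IsSparse.mono {S : Set (DyadicCube n)} {Λ Λ' : ℝ≥0∞} (hsp : IsSparse μ S Λ)
    (h : Λ ≤ Λ') : IsSparse μ S Λ' :=
  fun R => (hsp R).trans (mul_le_mul_left h _)

lemma _root_.IsSparse.sum_descendants_measureReal_le {S : Set (DyadicCube n)}
    [DecidablePred (· ∈ S)] {Λ : ℝ} (hsp : IsSparse μ S (ENNReal.ofReal Λ)) (hΛ : 0 ≤ Λ)
    (hfin : ∀ Q : DyadicCube n, μ Q.toSet ≠ ∞) (d : ℕ) (R : DyadicCube n) :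
    ∑ Q ∈ descendants d R with Q ∈ S, μ.real Q.toSet ≤ Λ * μ.real R.toSet := by
  classical
  have hpack : ∑ Q ∈ descendants d R with Q ∈ S, μ Q.toSet ≤ ENNReal.ofReal Λ * μ R.toSet :=
    calc ∑ Q ∈ descendants d R with Q ∈ S, μ Q.toSet
        = ∑ Q ∈ descendants d R with Q ∈ S ∧ Q.toSet ⊆ R.toSet, μ Q.toSet :=
          Finset.sum_congr (Finset.filter_congr fun Q hQ =>
            (and_iff_left (toSet_subset_of_mem_descendants hQ)).symm) fun _ _ => rfl
      _ = ∑ Q ∈ (descendants d R).subtype (fun Q => Q ∈ S ∧ Q.toSet ⊆ R.toSet), μ Q.1.toSet :=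
          (Finset.sum_subtype_eq_sum_filter _).symm
      _ ≤ _ := (ENNReal.sum_le_tsum _).trans (hsp R)
  rw [← ENNReal.toReal_ofReal hΛ]
  simp only [measureReal_def, ← ENNReal.toReal_mul, ← ENNReal.toReal_sum fun Q _ => hfin Q]
  exact ENNReal.toReal_mono (ENNReal.mul_ne_top ENNReal.ofReal_ne_top (hfin R)) hpack

lemma ofReal_avg_sq_mul_le (f : (Fin n → ℝ) → ℝ) {Q : DyadicCube n} (hQ : μ Q.toSet ≠ ∞) :
    ENNReal.ofReal (avg μ f Q ^ 2) * μ Q.toSet ≤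
      ENNReal.ofReal ((∫⁻ x in Q.toSet, ‖f x‖ₑ ∂μ).toReal ^ 2 / μ.real Q.toSet) := by
  by_cases h0 : μ Q.toSet = 0
  · simp [avg, h0]
  have hm : 0 < μ.real Q.toSet := ENNReal.toReal_pos h0 hQ
  have habs : |∫ x in Q.toSet, f x ∂μ| ≤ (∫⁻ x in Q.toSet, ‖f x‖ₑ ∂μ).toReal := by
    simpa [Real.enorm_eq_ofReal_abs] using
      norm_integral_le_lintegral_norm f (μ := μ.restrict Q.toSet)
  rw [avg, if_neg h0, ← measureReal_def, ← ENNReal.ofReal_toReal hQ, ← measureReal_def,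
    ← ENNReal.ofReal_mul (sq_nonneg _)]
  refine ENNReal.ofReal_le_ofReal ?_
  calc ((∫ x in Q.toSet, f x ∂μ) / μ.real Q.toSet) ^ 2 * μ.real Q.toSet
      = (∫ x in Q.toSet, f x ∂μ) ^ 2 / μ.real Q.toSet := by field_simp
    _ ≤ _ := div_le_div_of_nonneg_right (sq_le_sq' (abs_le.1 habs).1 (abs_le.1 habs).2) hm.le

theorem sum_sq_div_le_of_isSparse {S : Set (DyadicCube n)} {Λ : ℝ} (hΛ : 0 < Λ)
    (hfin : ∀ Q : DyadicCube n, μ Q.toSet ≠ ∞) (hsp : IsSparse μ S (ENNReal.ofReal Λ))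
    {f : (Fin n → ℝ) → ℝ} (hf : MemLp f 2 μ) (u : Finset (DyadicCube n)) (hu : ∀ Q ∈ u, Q ∈ S) :
    ∑ Q ∈ u, (∫⁻ x in Q.toSet, ‖f x‖ₑ ∂μ).toReal ^ 2 / μ.real Q.toSet ≤
      (4 * Λ + 2) * (eLpNorm f 2 μ ^ 2).toReal := by
  classical
  have hL2 : ∫⁻ x, ‖f x‖ₑ ^ 2 ∂μ ≠ ∞ :=
    lintegral_enorm_sq_eq_eLpNorm_sq f μ ▸ ENNReal.pow_ne_top hf.2.ne
  have hFfin : ∀ Q : DyadicCube n, ∫⁻ x in Q.toSet, ‖f x‖ₑ ^ 2 ∂μ ≠ ∞ := fun Q =>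
    ne_top_of_le_ne_top hL2 (setLIntegral_le_lintegral _ _)
  have hCS : ∀ Q : DyadicCube n,
      (∫⁻ x in Q.toSet, ‖f x‖ₑ ∂μ) ^ 2 ≤ μ Q.toSet * ∫⁻ x in Q.toSet, ‖f x‖ₑ ^ 2 ∂μ := fun Q => by
    simpa using sq_lintegral_le_measure_mul_lintegral_sq _ hf.1.enorm.restrict
  have hIfin : ∀ Q : DyadicCube n, ∫⁻ x in Q.toSet, ‖f x‖ₑ ∂μ ≠ ∞ := fun Q =>
    (ENNReal.pow_ne_top_iff.1 (ne_top_of_le_ne_top (ENNReal.mul_ne_top (hfin Q) (hFfin Q))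
      (hCS Q))).resolve_right two_ne_zero
  obtain ⟨A, hAdisj, hA⟩ := exists_pairwiseDisjoint_sum_sq_div_le
    (m := fun Q => μ.real Q.toSet) (I := fun Q => (∫⁻ x in Q.toSet, ‖f x‖ₑ ∂μ).toReal)
    (F := fun Q => (∫⁻ x in Q.toSet, ‖f x‖ₑ ^ 2 ∂μ).toReal) hΛ
    (fun _ => measureReal_nonneg) (fun _ => ENNReal.toReal_nonneg)
    (isChildAdditive_measureReal hfin) (isChildAdditive_toReal_setLIntegral hIfin)
    (isChildAdditive_toReal_setLIntegral hFfin)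
    (fun Q => by
      simpa [measureReal_def] using
        ENNReal.toReal_mono (ENNReal.mul_ne_top (hfin Q) (hFfin Q)) (hCS Q))
    (hsp.sum_descendants_measureReal_le hΛ.le hfin) u hu
  have hAsum : ∑ R ∈ A, (∫⁻ x in R.toSet, ‖f x‖ₑ ^ 2 ∂μ).toReal ≤
      (eLpNorm f 2 μ ^ 2).toReal := by
    rw [← ENNReal.toReal_sum fun R _ => hFfin R,
      ← lintegral_biUnion_finset hAdisj fun R _ => measurableSet_toSet R,
      ← lintegral_enorm_sq_eq_eLpNorm_sq]
    exact ENNReal.toReal_mono hL2 (setLIntegral_le_lintegral _ _)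
  exact hA.trans (mul_le_mul_of_nonneg_left hAsum (by positivity))

theorem sum_ofReal_avg_sq_mul_le {S : Set (DyadicCube n)} {Λ : ℝ} (hΛ : 0 < Λ)
    (hfin : ∀ Q : DyadicCube n, μ Q.toSet ≠ ∞) (hsp : IsSparse μ S (ENNReal.ofReal Λ))
    {f : (Fin n → ℝ) → ℝ} (hf : MemLp f 2 μ) (u : Finset (DyadicCube n)) (hu : ∀ Q ∈ u, Q ∈ S) :
    ∑ Q ∈ u, ENNReal.ofReal (avg μ f Q ^ 2) * μ Q.toSet ≤
      ENNReal.ofReal (4 * Λ + 2) * eLpNorm f 2 μ ^ 2 :=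
  calc ∑ Q ∈ u, ENNReal.ofReal (avg μ f Q ^ 2) * μ Q.toSet
      ≤ ∑ Q ∈ u, ENNReal.ofReal
          ((∫⁻ x in Q.toSet, ‖f x‖ₑ ∂μ).toReal ^ 2 / μ.real Q.toSet) :=
        Finset.sum_le_sum fun Q _ => ofReal_avg_sq_mul_le f (hfin Q)
    _ = ENNReal.ofReal
          (∑ Q ∈ u, (∫⁻ x in Q.toSet, ‖f x‖ₑ ∂μ).toReal ^ 2 / μ.real Q.toSet) :=
        (ENNReal.ofReal_sum_of_nonneg fun Q _ =>
          div_nonneg (sq_nonneg _) measureReal_nonneg).symm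
    _ ≤ ENNReal.ofReal ((4 * Λ + 2) * (eLpNorm f 2 μ ^ 2).toReal) :=
        ENNReal.ofReal_le_ofReal (sum_sq_div_le_of_isSparse hΛ hfin hsp hf u hu)
    _ = ENNReal.ofReal (4 * Λ + 2) * eLpNorm f 2 μ ^ 2 := by
        rw [ENNReal.ofReal_mul (by positivity),
          ENNReal.ofReal_toReal (ENNReal.pow_ne_top hf.2.ne)]

end Measure

end DyadicCube

/-- For a `μ`-sparse family `𝒮` of dyadic cubes,
`∑_{Q ∈ 𝒮} |⟨f⟩^μ_Q|² μ(Q) ≤ C ‖f‖²_{L²(μ)}` with `C` depending only on the sparseness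
constant. -/
theorem sparse_family_average_bound (Λ : ℝ≥0∞) (hΛ : Λ ≠ ⊤) :
    ∃ C : ℝ≥0∞, C ≠ ⊤ ∧
      ∀ (n : ℕ) (μ : Measure (Fin n → ℝ)),
        (∀ Q : DyadicCube n, μ Q.toSet < ⊤) →
        ∀ S : Set (DyadicCube n), IsSparse μ S Λ →
          ∀ f : (Fin n → ℝ) → ℝ, MemLp f 2 μ →
            ∑' Q : S, ENNReal.ofReal ((avg μ f Q.1) ^ 2) * μ Q.1.toSet
              ≤ C * eLpNorm f 2 μ ^ 2 := by
  refine ⟨ENNReal.ofReal (4 * (Λ.toReal + 1) + 2), ENNReal.ofReal_ne_top,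
    fun n μ hfin S hsp f hf => ?_⟩
  have hsp' : IsSparse μ S (ENNReal.ofReal (Λ.toReal + 1)) := hsp.mono <| by
    rw [ENNReal.ofReal_add ENNReal.toReal_nonneg zero_le_one, ENNReal.ofReal_toReal hΛ]
    exact le_self_add
  rw [ENNReal.tsum_eq_iSup_sum]
  refine iSup_le fun s => ?_
  refine (Finset.sum_map s (Function.Embedding.subtype (· ∈ S))
    fun Q => ENNReal.ofReal (avg μ f Q ^ 2) * μ Q.toSet).symm.trans_le ?_
  refine DyadicCube.sum_ofReal_avg_sq_mul_le (by positivity) (fun Q => (hfin Q).ne) hsp' hf _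
    fun Q hQ => ?_
  obtain ⟨Q, -, rfl⟩ := Finset.mem_map.1 hQ
  exact Q.2
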